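/- arXiv:1504.01979 — 8 statements merged into one kernel-verified Lean document; each statement's English description precedes it below -/
import Mathlib

section
/- (Theorem 1, case i=2, finite-group version.) For all (x,u,y,v,z) ∈ A⁵ one has (1/|A|) · ∑_{x′,v′,z′ ∈ A} T(x,x′) · conj(S(v,v′)) · S(z,z′) · D(x′,y,u,v′,z′) = conj(D(x,u,y,v,z)), where conj denotes complex conjugation and |A| is the cardinality of A. -/
/-!
The deltas in `T` and `D` force `x' = -x` and `v' = u + z'`, leaving one sum over `z'`.
Because `χ` is the coboundary of the even function `g`, `g (a - b) = g a * g b * χ a b`, so the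
summand is a constant times the character `z' ↦ χ (z - v + u - x) z'`. Orthogonality of the
nondegenerate symmetric bicharacter `χ` evaluates the sum to `|A|` times a delta, and the constant
left over is `g x * g z / g (z - x) = (χ x z)⁻¹ = conj (χ x z)`.
-/

open Finset

lemma Fintype.sum_sum_sum_eq_sum_of_ne_zero {α β γ M : Type*} [Fintype α] [Fintype β]
    [Fintype γ] [AddCommMonoid M] {F : α → β → γ → M} (a : α) (φ : γ → β)
    (hF : ∀ i j k, F i j k ≠ 0 → i = a ∧ j = φ k) :
    ∑ i, ∑ j, ∑ k, F i j k = ∑ k, F a (φ k) k := by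
  rw [Fintype.sum_eq_single a fun i hi =>
      Finset.sum_eq_zero fun j _ => Finset.sum_eq_zero fun k _ =>
        not_not.mp fun h => hi (hF i j k h).1, Finset.sum_comm]
  exact Fintype.sum_congr _ _ fun k => Fintype.sum_eq_single _ fun j hj =>
    not_not.mp fun h => hj (hF a j k h).2

section Bicharacter

variable {A K : Type*} [AddCommGroup A] [Field K] {χ : A → A → K}

def leftChar (hχ0 : ∀ x y, χ x y ≠ 0) (hχ_add : ∀ x x' y, χ (x + x') y = χ x y * χ x' y)
    (y : A) : AddChar A K where
  toFun x := χ x y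
  map_zero_eq_one' := by
    have h := hχ_add 0 0 y
    rw [add_zero] at h
    exact (mul_eq_left₀ (hχ0 0 y)).mp h.symm
  map_add_eq_mul' x x' := hχ_add x x' y

@[simp]
lemma leftChar_apply (hχ0 : ∀ x y, χ x y ≠ 0)
    (hχ_add : ∀ x x' y, χ (x + x') y = χ x y * χ x' y) (x y : A) :
    leftChar hχ0 hχ_add y x = χ x y := rfl

lemma leftChar_eq_zero_iff (hχ0 : ∀ x y, χ x y ≠ 0)
    (hχ_add : ∀ x x' y, χ (x + x') y = χ x y * χ x' y) (hχ_symm : ∀ x y, χ x y = χ y x)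
    (hχ_nondeg : ∀ x, x ≠ 0 → ∃ y, χ x y ≠ 1) {w : A} :
    leftChar hχ0 hχ_add w = 0 ↔ w = 0 := by
  refine ⟨fun h => by_contra fun hw => ?_, ?_⟩
  · obtain ⟨y, hy⟩ := hχ_nondeg w hw
    exact hy (by simpa [hχ_symm w y] using AddChar.eq_zero_iff.mp h y)
  · rintro rfl
    refine AddChar.eq_zero_iff.mpr fun x => ?_
    rw [leftChar_apply, hχ_symm, ← leftChar_apply hχ0 hχ_add, AddChar.map_zero_eq_one]

lemma sum_bichar_eq_ite [Fintype A] [DecidableEq A] (hχ0 : ∀ x y, χ x y ≠ 0)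
    (hχ_add : ∀ x x' y, χ (x + x') y = χ x y * χ x' y) (hχ_symm : ∀ x y, χ x y = χ y x)
    (hχ_nondeg : ∀ x, x ≠ 0 → ∃ y, χ x y ≠ 1) (w : A) :
    ∑ z, χ w z = if w = 0 then (Fintype.card A : K) else 0 := by
  simp_rw [hχ_symm w, ← leftChar_apply hχ0 hχ_add, AddChar.sum_eq_ite,
    leftChar_eq_zero_iff hχ0 hχ_add hχ_symm hχ_nondeg]

end Bicharacter

section Coboundary

variable {A : Type*} [AddCommGroup A] {g : A → ℂ} {χ : A → A → ℂ}

lemma coboundary_ne_zero (hg0 : ∀ x, g x ≠ 0) (hχ : ∀ x y, χ x y = g x * g y * (g (x + y))⁻¹)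
    (x y : A) : χ x y ≠ 0 := by
  rw [hχ]
  exact mul_ne_zero (mul_ne_zero (hg0 x) (hg0 y)) (inv_ne_zero (hg0 _))

lemma coboundary_symm (hχ : ∀ x y, χ x y = g x * g y * (g (x + y))⁻¹) (x y : A) :
    χ x y = χ y x := by
  rw [hχ, hχ, add_comm, mul_comm (g x)]

lemma conj_coboundary (hg : ∀ x, ‖g x‖ = 1) (hχ : ∀ x y, χ x y = g x * g y * (g (x + y))⁻¹)
    (x y : A) : (starRingEnd ℂ) (χ x y) = (χ x y)⁻¹ :=
  (Complex.inv_eq_conj (by simp [hχ, hg])).symm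

lemma g_sub_eq_mul_coboundary (hg0 : ∀ x, g x ≠ 0) (hg_sym : ∀ x, g (-x) = g x)
    (hχ : ∀ x y, χ x y = g x * g y * (g (x + y))⁻¹)
    (hχ_add : ∀ x x' y, χ (x + x') y = χ x y * χ x' y) (a b : A) :
    g (a - b) = g a * g b * χ a b := by
  have h := hχ a (-b)
  rw [coboundary_symm hχ, ← leftChar_apply (coboundary_ne_zero hg0 hχ) hχ_add,
    AddChar.map_neg_eq_inv, leftChar_apply, coboundary_symm hχ, hg_sym, ← sub_eq_add_neg] at h
  field_simp [coboundary_ne_zero hg0 hχ] at h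
  rw [eq_div_iff (hg0 _), one_mul] at h
  linear_combination h

lemma sum_conj_g_sub_mul_g_sub_mul_coboundary [Fintype A] [DecidableEq A]
    (hg : ∀ x, ‖g x‖ = 1) (hg_sym : ∀ x, g (-x) = g x)
    (hχ : ∀ x y, χ x y = g x * g y * (g (x + y))⁻¹)
    (hχ_add : ∀ x x' y, χ (x + x') y = χ x y * χ x' y)
    (hχ_nondeg : ∀ x, x ≠ 0 → ∃ y, χ x y ≠ 1) (a b c : A) :
    ∑ z, (starRingEnd ℂ) (g (a - z)) * g (b - z) * χ c z
      = if b - a + c = 0 then Fintype.card A * (g b / g a) else 0 := by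
  have hg0 : ∀ x, g x ≠ 0 := fun x => norm_ne_zero_iff.mp (by simp [hg])
  have hχ0 := coboundary_ne_zero hg0 hχ
  have hsummand : ∀ z, (starRingEnd ℂ) (g (a - z)) * g (b - z) * χ c z
      = g b / g a * χ (b - a + c) z := by
    intro z
    rw [← Complex.inv_eq_conj (hg _)]
    simp only [g_sub_eq_mul_coboundary hg0 hg_sym hχ hχ_add, ← leftChar_apply hχ0 hχ_add]
    rw [AddChar.map_add_eq_mul, AddChar.map_sub_eq_div]
    field_simp [hg0, hχ0]
  rw [Fintype.sum_congr _ _ hsummand, ← mul_sum,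
    sum_bichar_eq_ite hχ0 hχ_add (coboundary_symm hχ) hχ_nondeg]
  split_ifs <;> ring

lemma g_mul_div_g_sub_eq_conj_coboundary (hg : ∀ x, ‖g x‖ = 1) (hg_sym : ∀ x, g (-x) = g x)
    (hχ : ∀ x y, χ x y = g x * g y * (g (x + y))⁻¹)
    (hχ_add : ∀ x x' y, χ (x + x') y = χ x y * χ x' y) (x z : A) :
    g x * (g z / g (z - x)) = (starRingEnd ℂ) (χ x z) := by
  have hg0 : ∀ x, g x ≠ 0 := fun x => norm_ne_zero_iff.mp (by simp [hg])
  rw [g_sub_eq_mul_coboundary hg0 hg_sym hχ hχ_add, coboundary_symm hχ z, conj_coboundary hg hχ]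
  field_simp [hg0, coboundary_ne_zero hg0 hχ]

end Coboundary

/-- Theorem 1, case `i = 2`, finite-group version: P-symmetry relation
`(T ⊗ σ ⊗ S⁻¹ ⊗ S) D = conj D` written out in coordinates. -/
theorem pachner_P_symmetry_case_two
    {A : Type*} [AddCommGroup A] [Fintype A] [DecidableEq A]
    (g : A → ℂ) (hg_abs : ∀ x, ‖g x‖ = 1) (hg_sym : ∀ x, g (-x) = g x)
    (χ : A → A → ℂ) (hχ : ∀ x y, χ x y = g x * g y * (g (x + y))⁻¹)
    (hχ_add : ∀ x x' y, χ (x + x') y = χ x y * χ x' y)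
    (hχ_nondeg : ∀ x : A, x ≠ 0 → ∃ y : A, χ x y ≠ 1)
    (δ : A → ℂ) (hδ : ∀ a, δ a = if a = 0 then 1 else 0)
    (D : A → A → A → A → A → ℂ)
    (hD : ∀ x u y v z, D x u y v z = χ x z * δ (x - u + y) * δ (y - v + z))
    (T : A → A → ℂ) (hT : ∀ x y, T x y = δ (x + y) * g x)
    (S : A → A → ℂ) (hS : ∀ x y, S x y = g (x - y)) :
    ∀ x u y v z : A,
      (Fintype.card A : ℂ)⁻¹ *
          ∑ x' : A, ∑ v' : A, ∑ z' : A,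
            T x x' * (starRingEnd ℂ) (S v v') * S z z' * D x' y u v' z'
        = (starRingEnd ℂ) (D x u y v z) := by
  intro x u y v z
  have hT_ne : ∀ x', x' ≠ -x → T x x' = 0 := fun x' hx' => by
    rw [hT, hδ, if_neg fun h => hx' (eq_neg_of_add_eq_zero_right h), zero_mul]
  have hD_ne : ∀ x' v' z', v' ≠ u + z' → D x' y u v' z' = 0 := fun x' v' z' hv' => by
    rw [hD, hδ (u - v' + z'), if_neg fun h => hv' (by linear_combination (norm := abel) -h),
      mul_zero]
  rw [Fintype.sum_sum_sum_eq_sum_of_ne_zero (-x) (u + ·) fun x' v' z' h =>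
    ⟨by_contra fun hx' => h (by simp [hT_ne x' hx']),
      by_contra fun hv' => h (by simp [hD_ne _ _ _ hv'])⟩]
  by_cases hu : u = x + y
  · subst hu
    have hsummand : ∀ z', T x (-x) * (starRingEnd ℂ) (S v (x + y + z')) * S z z'
        * D (-x) y (x + y) (x + y + z') z'
        = g x * ((starRingEnd ℂ) (g (v - (x + y) - z')) * g (z - z') * χ (-x) z') := by
      intro z'
      rw [hT, hS, hS, hD, hδ, hδ, hδ, if_pos (add_neg_cancel x), if_pos (by abel),
        if_pos (by abel), sub_sub]
      ring
    rw [Fintype.sum_congr _ _ hsummand, ← mul_sum,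
      sum_conj_g_sub_mul_g_sub_mul_coboundary hg_abs hg_sym hχ hχ_add hχ_nondeg, hD, hδ, hδ,
      if_pos (by abel : x - (x + y) + y = 0), show z - (v - (x + y)) + -x = y - v + z by abel]
    split_ifs with hv
    · obtain rfl : v = y + z := by linear_combination (norm := abel) -hv
      rw [show y + z - (x + y) = z - x by abel, mul_one, mul_one,
        ← g_mul_div_g_sub_eq_conj_coboundary hg_abs hg_sym hχ hχ_add]
      field_simp
    · simp
  · have hδ_left : -x - y + u ≠ 0 := fun h => hu (by linear_combination (norm := abel) h)
    have hδ_right : x - u + y ≠ 0 := fun h => hu (by linear_combination (norm := abel) -h)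
    simp [hD, hδ, hδ_left, hδ_right]
end

section
/- (Theorem 1, case i=3, finite-group version.) For all (x,u,y,v,z) ∈ A⁵ one has (1/|A|) · ∑_{x′,u′,z′ ∈ A} S(x,x′) · conj(S(u,u′)) · T(z,z′) · D(x′,u′,v,y,z′) = conj(D(x,u,y,v,z)), where conj denotes complex conjugation and |A| is the cardinality of A. -/
/-!
Since `g` is even, `g (a - b) = g a * g b * χ a b`, and since `g` and `χ` are unimodular this gives
`S x x' * conj (S w x') = g x * conj (g w) * χ (x - w) x'`. Once the deltas in `T` and `D` have
fixed `z' = -z`, `u' = x' + v` and `v = y + z`, what remains is the character sum of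
`χ (x - u + y) ·` over `x'`, which by nondegeneracy is `|A|` or `0`.
-/

open Finset ComplexConjugate

def AddChar.ofMapAdd {A M : Type*} [AddMonoid A] [MonoidWithZero M] [IsLeftCancelMulZero M]
    (f : A → M) (h0 : f 0 ≠ 0) (hf : ∀ a b, f (a + b) = f a * f b) : AddChar A M where
  toFun := f
  map_zero_eq_one' := mul_left_cancel₀ h0 (by rw [← hf, add_zero, mul_one])
  map_add_eq_mul' := hf

lemma Complex.ne_zero_of_norm_eq_one {z : ℂ} (hz : ‖z‖ = 1) : z ≠ 0 :=
  norm_ne_zero_iff.mp (hz ▸ one_ne_zero)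

lemma Complex.mul_conj_of_norm_eq_one {z : ℂ} (hz : ‖z‖ = 1) : z * conj z = 1 := by
  rw [Complex.mul_conj', hz, Complex.ofReal_one, one_pow]

section Polarization

variable {A : Type*} [AddCommGroup A] {g : A → ℂ} {χ : A → A → ℂ}

lemma polarization_comm (hχ : ∀ a b, χ a b = g a * g b * (g (a + b))⁻¹) (a b : A) :
    χ a b = χ b a := by
  rw [hχ, hχ, add_comm, mul_comm (g a)]

lemma polarization_ne_zero (hg : ∀ a, g a ≠ 0) (hχ : ∀ a b, χ a b = g a * g b * (g (a + b))⁻¹)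
    (a b : A) : χ a b ≠ 0 := by
  rw [hχ]
  exact mul_ne_zero (mul_ne_zero (hg a) (hg b)) (inv_ne_zero (hg _))

def polarizationChar (hg : ∀ a, g a ≠ 0) (hχ : ∀ a b, χ a b = g a * g b * (g (a + b))⁻¹)
    (hχ_add : ∀ a a' b, χ (a + a') b = χ a b * χ a' b) (b : A) : AddChar A ℂ :=
  AddChar.ofMapAdd (χ · b) (polarization_ne_zero hg hχ 0 b) (fun a a' => hχ_add a a' b)

@[simp]
lemma polarizationChar_apply (hg : ∀ a, g a ≠ 0) (hχ : ∀ a b, χ a b = g a * g b * (g (a + b))⁻¹)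
    (hχ_add : ∀ a a' b, χ (a + a') b = χ a b * χ a' b) (a b : A) :
    polarizationChar hg hχ hχ_add b a = χ a b :=
  rfl

lemma apply_sub_eq_mul_polarization (hg : ∀ a, g a ≠ 0) (hg_sym : ∀ a, g (-a) = g a)
    (hχ : ∀ a b, χ a b = g a * g b * (g (a + b))⁻¹)
    (hχ_add : ∀ a a' b, χ (a + a') b = χ a b * χ a' b) (a b : A) :
    g (a - b) = g a * g b * χ a b := by
  have h := hχ a (-b)
  rw [polarization_comm hχ, ← polarizationChar_apply hg hχ hχ_add, AddChar.map_neg_eq_inv,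
    polarizationChar_apply, polarization_comm hχ, hg_sym, ← sub_eq_add_neg] at h
  field_simp [hg, polarization_ne_zero hg hχ] at h
  linear_combination h

lemma sum_polarization_right [Fintype A] [DecidableEq A] (hg : ∀ a, g a ≠ 0)
    (hχ : ∀ a b, χ a b = g a * g b * (g (a + b))⁻¹)
    (hχ_add : ∀ a a' b, χ (a + a') b = χ a b * χ a' b)
    (hχ_nondeg : ∀ a : A, a ≠ 0 → ∃ b, χ a b ≠ 1) (a : A) :
    ∑ b, χ a b = if a = 0 then (Fintype.card A : ℂ) else 0 := by
  have htrivial : polarizationChar hg hχ hχ_add a = 0 ↔ a = 0 := by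
    simp only [AddChar.eq_zero_iff, polarizationChar_apply, polarization_comm hχ _ a]
    refine ⟨fun h => by_contra fun ha => ?_, fun ha b => ?_⟩
    · obtain ⟨b, hb⟩ := hχ_nondeg a ha
      exact hb (h b)
    · rw [ha, ← polarizationChar_apply hg hχ hχ_add 0 b, AddChar.map_zero_eq_one]
  simp_rw [polarization_comm hχ a, ← polarizationChar_apply hg hχ hχ_add, AddChar.sum_eq_ite,
    htrivial]

lemma sum_apply_sub_mul_conj_apply_sub [Fintype A] [DecidableEq A] (hg_abs : ∀ a, ‖g a‖ = 1)
    (hg_sym : ∀ a, g (-a) = g a) (hχ : ∀ a b, χ a b = g a * g b * (g (a + b))⁻¹)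
    (hχ_add : ∀ a a' b, χ (a + a') b = χ a b * χ a' b)
    (hχ_nondeg : ∀ a : A, a ≠ 0 → ∃ b, χ a b ≠ 1) (x w c : A) :
    ∑ t, g (x - t) * conj (g (w - t)) * χ t c
      = g x * conj (g w) * if x - w + c = 0 then (Fintype.card A : ℂ) else 0 := by
  have hg a := Complex.ne_zero_of_norm_eq_one (hg_abs a)
  have hterm t : g (x - t) * conj (g (w - t)) * χ t c = g x * conj (g w) * χ (x - w + c) t := by
    have hχ_char := polarizationChar_apply hg hχ hχ_add
    rw [← hχ_char (x - w + c), AddChar.map_add_eq_mul, AddChar.map_sub_eq_div, hχ_char, hχ_char,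
      hχ_char, ← polarization_comm hχ, ← Complex.inv_eq_conj (hg_abs _),
      ← Complex.inv_eq_conj (hg_abs _),
      apply_sub_eq_mul_polarization hg hg_sym hχ hχ_add,
      apply_sub_eq_mul_polarization hg hg_sym hχ hχ_add]
    field_simp [hg, polarization_ne_zero hg hχ]
  rw [sum_congr rfl fun t _ => hterm t, ← mul_sum,
    sum_polarization_right hg hχ hχ_add hχ_nondeg]

end Polarization

lemma sum_S_conj_S_T_D_eq {A : Type*} [AddCommGroup A] [Fintype A] [DecidableEq A]
    {g : A → ℂ} {χ : A → A → ℂ} {δ : A → ℂ} (hδ : ∀ a, δ a = if a = 0 then 1 else 0)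
    {D : A → A → A → A → A → ℂ}
    (hD : ∀ x u y v z, D x u y v z = χ x z * δ (x - u + y) * δ (y - v + z))
    {T : A → A → ℂ} (hT : ∀ x y, T x y = δ (x + y) * g x)
    {S : A → A → ℂ} (hS : ∀ x y, S x y = g (x - y)) (x u y v z : A) :
    ∑ x' : A, ∑ u' : A, ∑ z' : A, S x x' * conj (S u u') * T z z' * D x' u' v y z'
      = δ (y - v + z) * (g z * ∑ x', g (x - x') * conj (g (u - v - x')) * χ x' (-z)) := by
  have hz z' : z + z' = 0 ↔ z' = -z := by rw [add_comm, add_eq_zero_iff_eq_neg]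
  have hu x' u' : x' - u' + v = 0 ↔ u' = x' + v := by rw [sub_add_eq_add_sub, sub_eq_zero, eq_comm]
  have hz' z' : v - y + z' = 0 ↔ z' = y - v := by rw [add_comm, add_eq_zero_iff_eq_neg, neg_sub]
  have hv : y - v + z = 0 ↔ y - v = -z := add_eq_zero_iff_eq_neg
  simp only [hS, hT, hD, hδ, hz, hu, hz', hv, ite_mul, mul_ite, one_mul, zero_mul, mul_zero,
    sum_ite_eq', mem_univ, if_true, sum_ite_irrel, sum_const_zero]
  split_ifs with h
  · rw [h, mul_sum]
    refine sum_congr rfl fun x' _ => ?_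
    rw [show u - (x' + v) = u - v - x' by abel]
    ring
  · rfl

/-- Theorem 1, case `i = 3`, finite-group version: P-symmetry relation
`(S ⊗ S⁻¹ ⊗ σ ⊗ T) D = conj D` written out in coordinates. -/
theorem pachner_P_symmetry_case_three
    {A : Type*} [AddCommGroup A] [Fintype A] [DecidableEq A]
    (g : A → ℂ) (hg_abs : ∀ x, ‖g x‖ = 1) (hg_sym : ∀ x, g (-x) = g x)
    (χ : A → A → ℂ) (hχ : ∀ x y, χ x y = g x * g y * (g (x + y))⁻¹)
    (hχ_add : ∀ x x' y, χ (x + x') y = χ x y * χ x' y)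
    (hχ_nondeg : ∀ x : A, x ≠ 0 → ∃ y : A, χ x y ≠ 1)
    (δ : A → ℂ) (hδ : ∀ a, δ a = if a = 0 then 1 else 0)
    (D : A → A → A → A → A → ℂ)
    (hD : ∀ x u y v z, D x u y v z = χ x z * δ (x - u + y) * δ (y - v + z))
    (T : A → A → ℂ) (hT : ∀ x y, T x y = δ (x + y) * g x)
    (S : A → A → ℂ) (hS : ∀ x y, S x y = g (x - y)) :
    ∀ x u y v z : A,
      (Fintype.card A : ℂ)⁻¹ *
          ∑ x' : A, ∑ u' : A, ∑ z' : A,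
            S x x' * (starRingEnd ℂ) (S u u') * T z z' * D x' u' v y z'
        = (starRingEnd ℂ) (D x u y v z) := by
  intro x u y v z
  have hg a := Complex.ne_zero_of_norm_eq_one (hg_abs a)
  rw [sum_S_conj_S_T_D_eq hδ hD hT hS, hD, hδ (y - v + z)]
  split_ifs with hv
  · obtain rfl : v = y + z := by rw [← sub_eq_zero, ← neg_eq_zero, ← hv]; abel
    rw [sum_apply_sub_mul_conj_apply_sub hg_abs hg_sym hχ hχ_add hχ_nondeg,
      show x - (u - (y + z)) + -z = x - u + y by abel, hδ]
    split_ifs with hu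
    · obtain rfl : u = x + y := by rw [← sub_eq_zero, ← neg_eq_zero, ← hu]; abel
      have hcard : (Fintype.card A : ℂ) ≠ 0 := Nat.cast_ne_zero.mpr Fintype.card_ne_zero
      rw [show x + y - (y + z) = x - z by abel, apply_sub_eq_mul_polarization hg hg_sym hχ hχ_add,
        mul_one, mul_one]
      calc _ = g x * conj (g x) * (g z * conj (g z)) * conj (χ x z)
            * (Fintype.card A * (Fintype.card A : ℂ)⁻¹) := by
            simp only [map_mul]
            ring
        _ = conj (χ x z) := by
            rw [Complex.mul_conj_of_norm_eq_one (hg_abs x),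
              Complex.mul_conj_of_norm_eq_one (hg_abs z), mul_inv_cancel₀ hcard, one_mul, one_mul,
              mul_one]
    · simp
  · simp
end

section
/- (Theorem 1, finite-group version, combined statement: P-symmetry of the distribution D.) The following four equalities hold simultaneously for all (x,u,y,v,z) ∈ A⁵: (i) ∑_{y′,v′,z′ ∈ A} T(y,y′)·conj(T(v,v′))·T(z,z′)·D(u,x,y′,v′,z′) = conj(D(x,u,y,v,z)); (ii) (1/|A|)·∑_{x′,v′,z′ ∈ A} T(x,x′)·conj(S(v,v′))·S(z,z′)·D(x′,y,u,v′,z′) = conj(D(x,u,y,v,z)); (iii) (1/|A|)·∑_{x′,u′,z′ ∈ A} S(x,x′)·conj(S(u,u′))·T(z,z′)·D(x′,u′,v,y,z′) = conj(D(x,u,y,v,z)); (iv) ∑_{x′,u′,y′ ∈ A} T(x,x′)·conj(T(u,u′))·T(y,y′)·D(x′,u′,y′,z,v) = conj(D(x,u,y,v,z)). -/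
/-!
Both sides of each identity are supported on `u = x + y`, `v = y + z`. Summing against `T` is
the reflection `y' ↦ -y` weighted by `g y`, so in (i) and (iv) a single term is left, while in
(ii) and (iii) the `T`-sum and one constraint of `D` leave one sum over `w`. Because `g` is even
and `χ` is its coboundary, `g (a - w) = g a * g w * χ a w`; hence the `g w` factors of
`conj (S a w) * S b w` cancel and that sum is the character sum `∑ w, χ (b - a + c) w`, which by
nondegeneracy is `|A|` times a delta, cancelling the normalisation `1 / |A|`. On the support the
remaining phases combine, by bilinearity of `χ`, to `(χ x z)⁻¹ = conj (χ x z)`.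
-/

open Finset ComplexConjugate

namespace Pachner

noncomputable section

variable {A : Type*} [AddCommGroup A]

def coboundary (g : A → ℂ) (x y : A) : ℂ := g x * g y * (g (x + y))⁻¹

section Coboundary

variable {g : A → ℂ}

theorem coboundary_comm (x y : A) : coboundary g x y = coboundary g y x := by
  rw [coboundary, coboundary, add_comm x y, mul_comm (g x)]

theorem coboundary_ne_zero (hg : ∀ x, g x ≠ 0) (x y : A) : coboundary g x y ≠ 0 := by
  simp [coboundary, hg]

theorem conj_coboundary (hg : ∀ x, ‖g x‖ = 1) (x y : A) :
    conj (coboundary g x y) = (coboundary g x y)⁻¹ := by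
  simp only [coboundary, map_mul, map_inv₀, ← Complex.inv_eq_conj (hg _), mul_inv, inv_inv]

theorem apply_zero_eq_one (hg : ∀ x, g x ≠ 0)
    (hadd : ∀ x x' y, coboundary g (x + x') y = coboundary g x y * coboundary g x' y) :
    g 0 = 1 := by
  have h := hadd 0 0 0
  simp only [coboundary, add_zero] at h
  field_simp [hg 0] at h
  exact h.symm

def coboundaryChar (hg : ∀ x, g x ≠ 0)
    (hadd : ∀ x x' y, coboundary g (x + x') y = coboundary g x y * coboundary g x' y) (y : A) :
    AddChar A ℂ where
  toFun x := coboundary g x y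
  map_zero_eq_one' := by simp [coboundary, apply_zero_eq_one hg hadd, hg y]
  map_add_eq_mul' x x' := hadd x x' y

theorem coboundary_neg_left (hg : ∀ x, g x ≠ 0)
    (hadd : ∀ x x' y, coboundary g (x + x') y = coboundary g x y * coboundary g x' y) (x y : A) :
    coboundary g (-x) y = (coboundary g x y)⁻¹ :=
  (coboundaryChar hg hadd y).map_neg_eq_inv x

theorem coboundary_neg_right (hg : ∀ x, g x ≠ 0)
    (hadd : ∀ x x' y, coboundary g (x + x') y = coboundary g x y * coboundary g x' y) (x y : A) :
    coboundary g x (-y) = (coboundary g x y)⁻¹ := by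
  rw [coboundary_comm, coboundary_neg_left hg hadd, coboundary_comm]

theorem coboundary_add_right
    (hadd : ∀ x x' y, coboundary g (x + x') y = coboundary g x y * coboundary g x' y)
    (x y y' : A) :
    coboundary g x (y + y') = coboundary g x y * coboundary g x y' := by
  rw [coboundary_comm, hadd, coboundary_comm y, coboundary_comm y']

theorem apply_sub_eq_mul_coboundary (hg : ∀ x, g x ≠ 0)
    (hadd : ∀ x x' y, coboundary g (x + x') y = coboundary g x y * coboundary g x' y)
    (hneg : ∀ x, g (-x) = g x) (x y : A) :
    g (x - y) = g x * g y * coboundary g x y := by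
  have h := coboundary_neg_right hg hadd x y
  rw [coboundary, hneg, ← sub_eq_add_neg] at h
  rw [← inv_inv (coboundary g x y), ← h]
  field_simp [hg]

theorem sum_coboundary [Fintype A] [DecidableEq A] (hg : ∀ x, g x ≠ 0)
    (hadd : ∀ x x' y, coboundary g (x + x') y = coboundary g x y * coboundary g x' y)
    (hnondeg : ∀ x, x ≠ 0 → ∃ y, coboundary g x y ≠ 1) (x : A) :
    ∑ y, coboundary g x y = if x = 0 then (Fintype.card A : ℂ) else 0 := by
  have htriv : coboundaryChar hg hadd x = 0 ↔ x = 0 := by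
    rw [AddChar.eq_zero_iff]
    constructor
    · intro h
      by_contra hx
      obtain ⟨y, hy⟩ := hnondeg x hx
      exact hy (coboundary_comm x y ▸ h y)
    · rintro rfl y
      show coboundary g y 0 = 1
      rw [coboundary_comm]
      exact (coboundaryChar hg hadd y).map_zero_eq_one
  simp_rw [coboundary_comm x]
  exact (AddChar.sum_eq_ite (coboundaryChar hg hadd x)).trans (by simp only [htriv])

end Coboundary

variable [DecidableEq A]

def delta (a : A) : ℂ := if a = 0 then 1 else 0

def D (g : A → ℂ) (x u y v z : A) : ℂ :=
  coboundary g x z * delta (x - u + y) * delta (y - v + z)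

def T (g : A → ℂ) (x y : A) : ℂ := delta (x + y) * g x

def S (g : A → ℂ) (x y : A) : ℂ := g (x - y)

variable {g : A → ℂ}

theorem D_eq_ite (x u y v z : A) :
    D g x u y v z = if u = x + y then if v = y + z then coboundary g x z else 0 else 0 := by
  have hu : x - u + y = 0 ↔ u = x + y := by grind
  have hv : y - v + z = 0 ↔ v = y + z := by grind
  simp only [D, delta, hu, hv]
  split_ifs <;> simp

theorem conj_D (x u y v z : A) :
    conj (D g x u y v z) =
      if u = x + y then if v = y + z then conj (coboundary g x z) else 0 else 0 := by
  rw [D_eq_ite]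
  split_ifs <;> simp

theorem T_eq_ite (x y : A) : T g x y = if y = -x then g x else 0 := by
  simp only [T, delta, add_eq_zero_iff_eq_neg', ite_mul, one_mul, zero_mul]

variable [Fintype A]

theorem sum_conj_S_mul_S_mul_coboundary (hg : ∀ x, ‖g x‖ = 1)
    (hadd : ∀ x x' y, coboundary g (x + x') y = coboundary g x y * coboundary g x' y)
    (hneg : ∀ x, g (-x) = g x) (hnondeg : ∀ x, x ≠ 0 → ∃ y, coboundary g x y ≠ 1)
    (a b c : A) :
    ∑ w, conj (S g a w) * S g b w * coboundary g c w =
      if b - a + c = 0 then conj (g a) * g b * Fintype.card A else 0 := by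
  have hg0 (x : A) : g x ≠ 0 := norm_ne_zero_iff.mp (by simp [hg])
  have hterm (w : A) : conj (S g a w) * S g b w * coboundary g c w =
      conj (g a) * g b * coboundary g (b - a + c) w := by
    rw [S, S, sub_eq_add_neg b a, hadd, hadd, coboundary_neg_left hg0 hadd,
      apply_sub_eq_mul_coboundary hg0 hadd hneg, apply_sub_eq_mul_coboundary hg0 hadd hneg]
    simp only [map_mul, conj_coboundary hg, ← Complex.inv_eq_conj (hg _)]
    field_simp [hg0, coboundary_ne_zero hg0]
  rw [Fintype.sum_congr _ _ hterm, ← mul_sum, sum_coboundary hg0 hadd hnondeg, mul_ite, mul_zero]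

theorem sum_T_conj_T_T_D_yvz (hg : ∀ x, ‖g x‖ = 1)
    (hadd : ∀ x x' y, coboundary g (x + x') y = coboundary g x y * coboundary g x' y)
    (x u y v z : A) :
    ∑ y', ∑ v', ∑ z', T g y y' * conj (T g v v') * T g z z' * D g u x y' v' z' =
      conj (D g x u y v z) := by
  have hg0 (x : A) : g x ≠ 0 := norm_ne_zero_iff.mp (by simp [hg])
  simp only [T_eq_ite, ite_mul, mul_ite, zero_mul, mul_zero, map_zero, apply_ite conj,
    Fintype.sum_ite_eq']
  rw [D_eq_ite, conj_D]
  by_cases h : u = x + y ∧ v = y + z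
  · obtain ⟨rfl, rfl⟩ := h
    rw [if_pos (by abel), if_pos (by abel), if_pos rfl, if_pos rfl]
    simp only [hadd, coboundary_neg_right hg0 hadd, conj_coboundary hg,
      ← Complex.inv_eq_conj (hg _)]
    simp only [coboundary]
    field_simp [hg0]
  · split_ifs <;> grind

theorem inv_card_mul_sum_T_conj_S_S_D (hg : ∀ x, ‖g x‖ = 1)
    (hadd : ∀ x x' y, coboundary g (x + x') y = coboundary g x y * coboundary g x' y)
    (hneg : ∀ x, g (-x) = g x) (hnondeg : ∀ x, x ≠ 0 → ∃ y, coboundary g x y ≠ 1)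
    (x u y v z : A) :
    (Fintype.card A : ℂ)⁻¹ *
        ∑ x', ∑ v', ∑ z', T g x x' * conj (S g v v') * S g z z' * D g x' y u v' z' =
      conj (D g x u y v z) := by
  have hg0 (x : A) : g x ≠ 0 := norm_ne_zero_iff.mp (by simp [hg])
  rw [conj_D]
  simp only [T_eq_ite, ite_mul, zero_mul, sum_ite_irrel, sum_const_zero, Fintype.sum_ite_eq']
  rw [sum_comm]
  simp only [D_eq_ite, mul_ite, mul_zero, sum_ite_irrel, sum_const_zero, Fintype.sum_ite_eq']
  have hsum : ∑ w, g x * conj (S g v (u + w)) * S g z w * coboundary g (-x) w =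
      g x * if z - (v - u) + -x = 0 then conj (g (v - u)) * g z * Fintype.card A else 0 := by
    rw [← sum_conj_S_mul_S_mul_coboundary hg hadd hneg hnondeg, mul_sum]
    simp only [S, sub_add_eq_sub_sub, mul_assoc]
  rw [hsum]
  by_cases h : u = x + y ∧ v = y + z
  · obtain ⟨rfl, rfl⟩ := h
    rw [if_pos (by abel), if_pos (by abel), if_pos rfl, if_pos rfl,
      show y + z - (x + y) = z - x by abel, apply_sub_eq_mul_coboundary hg0 hadd hneg,
      coboundary_comm z]
    simp only [map_mul, conj_coboundary hg, ← Complex.inv_eq_conj (hg _)]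
    field_simp [hg0, coboundary_ne_zero hg0]
  · split_ifs <;> grind

theorem inv_card_mul_sum_S_conj_S_T_D (hg : ∀ x, ‖g x‖ = 1)
    (hadd : ∀ x x' y, coboundary g (x + x') y = coboundary g x y * coboundary g x' y)
    (hneg : ∀ x, g (-x) = g x) (hnondeg : ∀ x, x ≠ 0 → ∃ y, coboundary g x y ≠ 1)
    (x u y v z : A) :
    (Fintype.card A : ℂ)⁻¹ *
        ∑ x', ∑ u', ∑ z', S g x x' * conj (S g u u') * T g z z' * D g x' u' v y z' =
      conj (D g x u y v z) := by
  have hg0 (x : A) : g x ≠ 0 := norm_ne_zero_iff.mp (by simp [hg])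
  rw [conj_D]
  simp only [T_eq_ite, mul_ite, ite_mul, zero_mul, mul_zero, Fintype.sum_ite_eq']
  simp only [D_eq_ite, mul_ite, mul_zero, sum_ite_irrel, sum_const_zero, Fintype.sum_ite_eq']
  have hsum : ∑ w, S g x w * conj (S g u (w + v)) * g z * coboundary g w (-z) =
      g z * if x - (u - v) + -z = 0 then conj (g (u - v)) * g x * Fintype.card A else 0 := by
    rw [← sum_conj_S_mul_S_mul_coboundary hg hadd hneg hnondeg, mul_sum]
    refine sum_congr rfl fun w _ => ?_
    simp only [S, coboundary_comm w, show u - (w + v) = u - v - w by abel]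
    ring
  rw [hsum]
  by_cases h : u = x + y ∧ v = y + z
  · obtain ⟨rfl, rfl⟩ := h
    rw [if_pos (by abel), if_pos (by abel), if_pos rfl, if_pos rfl,
      show x + y - (y + z) = x - z by abel, apply_sub_eq_mul_coboundary hg0 hadd hneg]
    simp only [map_mul, conj_coboundary hg, ← Complex.inv_eq_conj (hg _)]
    field_simp [hg0, coboundary_ne_zero hg0]
  · split_ifs <;> grind

theorem sum_T_conj_T_T_D_xuy (hg : ∀ x, ‖g x‖ = 1)
    (hadd : ∀ x x' y, coboundary g (x + x') y = coboundary g x y * coboundary g x' y)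
    (x u y v z : A) :
    ∑ x', ∑ u', ∑ y', T g x x' * conj (T g u u') * T g y y' * D g x' u' y' z v =
      conj (D g x u y v z) := by
  have hg0 (x : A) : g x ≠ 0 := norm_ne_zero_iff.mp (by simp [hg])
  simp only [T_eq_ite, ite_mul, mul_ite, zero_mul, mul_zero, map_zero, apply_ite conj,
    Fintype.sum_ite_eq']
  rw [D_eq_ite, conj_D]
  by_cases h : u = x + y ∧ v = y + z
  · obtain ⟨rfl, rfl⟩ := h
    rw [if_pos (by abel), if_pos (by abel), if_pos rfl, if_pos rfl]
    simp only [coboundary_neg_left hg0 hadd, coboundary_add_right hadd, conj_coboundary hg,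
      ← Complex.inv_eq_conj (hg _)]
    simp only [coboundary]
    field_simp [hg0]
  · split_ifs <;> grind

end

end Pachner

/-- Theorem 1, finite-group version, combined statement: the distribution `D` is
P-symmetric, i.e. all four symmetry relations hold simultaneously. -/
theorem pachner_P_symmetry_combined
    {A : Type*} [AddCommGroup A] [Fintype A] [DecidableEq A]
    (g : A → ℂ) (hg_abs : ∀ x, ‖g x‖ = 1) (hg_sym : ∀ x, g (-x) = g x)
    (χ : A → A → ℂ) (hχ : ∀ x y, χ x y = g x * g y * (g (x + y))⁻¹)
    (hχ_add : ∀ x x' y, χ (x + x') y = χ x y * χ x' y)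
    (hχ_nondeg : ∀ x : A, x ≠ 0 → ∃ y : A, χ x y ≠ 1)
    (δ : A → ℂ) (hδ : ∀ a, δ a = if a = 0 then 1 else 0)
    (D : A → A → A → A → A → ℂ)
    (hD : ∀ x u y v z, D x u y v z = χ x z * δ (x - u + y) * δ (y - v + z))
    (T : A → A → ℂ) (hT : ∀ x y, T x y = δ (x + y) * g x)
    (S : A → A → ℂ) (hS : ∀ x y, S x y = g (x - y)) :
    (∀ x u y v z : A,
        ∑ y' : A, ∑ v' : A, ∑ z' : A,
            T y y' * (starRingEnd ℂ) (T v v') * T z z' * D u x y' v' z'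
          = (starRingEnd ℂ) (D x u y v z)) ∧
    (∀ x u y v z : A,
        (Fintype.card A : ℂ)⁻¹ *
            ∑ x' : A, ∑ v' : A, ∑ z' : A,
              T x x' * (starRingEnd ℂ) (S v v') * S z z' * D x' y u v' z'
          = (starRingEnd ℂ) (D x u y v z)) ∧
    (∀ x u y v z : A,
        (Fintype.card A : ℂ)⁻¹ *
            ∑ x' : A, ∑ u' : A, ∑ z' : A,
              S x x' * (starRingEnd ℂ) (S u u') * T z z' * D x' u' v y z'
          = (starRingEnd ℂ) (D x u y v z)) ∧
    (∀ x u y v z : A,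
        ∑ x' : A, ∑ u' : A, ∑ y' : A,
            T x x' * (starRingEnd ℂ) (T u u') * T y y' * D x' u' y' z v
          = (starRingEnd ℂ) (D x u y v z)) := by
  obtain rfl : χ = Pachner.coboundary g := funext₂ hχ
  obtain rfl : δ = Pachner.delta := funext hδ
  obtain rfl : D = Pachner.D g := by funext x u y v z; exact hD x u y v z
  obtain rfl : T = Pachner.T g := funext₂ hT
  obtain rfl : S = Pachner.S g := funext₂ hS
  exact ⟨Pachner.sum_T_conj_T_T_D_yvz hg_abs hχ_add,
    Pachner.inv_card_mul_sum_T_conj_S_S_D hg_abs hχ_add hg_sym hχ_nondeg,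
    Pachner.inv_card_mul_sum_S_conj_S_T_D hg_abs hχ_add hg_sym hχ_nondeg,
    Pachner.sum_T_conj_T_T_D_xuy hg_abs hχ_add⟩
end

section
/- (Unitarity of the operator S, finite-group version.) For all x, y ∈ A one has ∑_{z ∈ A} g(x−z) · conj(g(y−z)) = |A| · δ(x−y), where conj denotes complex conjugation and |A| is the cardinality of A. In particular, the matrix (|A|^{−1/2}·g(x−y))_{x,y ∈ A} is unitary. -/
/-!
With `a = x - y` and `w = y - z`, the summand `g (a + w) * conj (g w) = g (a + w) / g w` equals
`g a * χ(a, w)⁻¹`. The cocycle `χ` is symmetric, so additivity in the first argument gives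
additivity in the second, and `χ(a, ·)` is an additive character of `A`, nontrivial for `a ≠ 0`
by nondegeneracy. Its character sum vanishes, which leaves only the diagonal term `|A|`.
-/

open Finset Matrix

section Coboundary

variable {A K : Type*} [AddCommGroup A] [Field K]

def mulCoboundary (g : A → K) (x y : A) : K := g x * g y * (g (x + y))⁻¹

variable {g : A → K}

lemma mulCoboundary_comm (x y : A) : mulCoboundary g x y = mulCoboundary g y x := by
  simp only [mulCoboundary, add_comm x y, mul_comm (g x)]

lemma mulCoboundary_zero_right (hg : ∀ x, g x ≠ 0) (x : A) : mulCoboundary g x 0 = g 0 := by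
  simp only [mulCoboundary, add_zero]
  field_simp [hg x]

variable (hg : ∀ x, g x ≠ 0)
  (hadd : ∀ x x' y, mulCoboundary g (x + x') y = mulCoboundary g x y * mulCoboundary g x' y)
include hg hadd

lemma apply_zero_eq_one_of_mulCoboundary_add_left : g 0 = 1 := by
  have h := hadd 0 0 0
  rw [add_zero, mulCoboundary_zero_right hg] at h
  exact (mul_eq_left₀ (hg 0)).1 h.symm

def mulCoboundaryAddChar (a : A) : AddChar A K where
  toFun := mulCoboundary g a
  map_zero_eq_one' := by
    rw [mulCoboundary_zero_right hg, apply_zero_eq_one_of_mulCoboundary_add_left hg hadd]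
  map_add_eq_mul' w w' := by
    simp only [mulCoboundary_comm a, hadd]

lemma sum_inv_mulCoboundary_eq_zero [Fintype A] {a : A} (ha : ∃ y, mulCoboundary g a y ≠ 1) :
    ∑ w, (mulCoboundary g a w)⁻¹ = 0 := by
  have hψ : (mulCoboundaryAddChar hg hadd a)⁻¹ ≠ 1 := inv_ne_one.2 (AddChar.ne_one_iff.2 ha)
  have hsum := AddChar.sum_eq_zero_of_ne_one hψ
  simp only [AddChar.inv_apply'] at hsum
  exact hsum

end Coboundary

section Unitary

variable {A : Type*} [AddCommGroup A] [Fintype A] [DecidableEq A] {g : A → ℂ}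

open ComplexConjugate

lemma sum_apply_sub_mul_conj_apply_sub_s5 (hg_abs : ∀ x, ‖g x‖ = 1)
    (hadd : ∀ x x' y, mulCoboundary g (x + x') y = mulCoboundary g x y * mulCoboundary g x' y)
    (hnondeg : ∀ x : A, x ≠ 0 → ∃ y, mulCoboundary g x y ≠ 1) (x y : A) :
    ∑ z, g (x - z) * conj (g (y - z)) = if x = y then (Fintype.card A : ℂ) else 0 := by
  have hg (x : A) : g x ≠ 0 := norm_ne_zero_iff.1 (by simp [hg_abs])
  split_ifs with hxy
  · subst hxy
    simp [Complex.mul_conj, Complex.normSq_eq_norm_sq, hg_abs]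
  have hterm (w : A) :
      g (x - (y - w)) * conj (g (y - (y - w))) = g (x - y) * (mulCoboundary g (x - y) w)⁻¹ := by
    rw [← Complex.inv_eq_conj (hg_abs _), sub_sub_cancel, sub_sub_eq_add_sub, add_sub_right_comm,
      mulCoboundary]
    field_simp [hg]
  calc ∑ z, g (x - z) * conj (g (y - z))
      = ∑ w, g (x - (y - w)) * conj (g (y - (y - w))) :=
        (Equiv.sum_comp (Equiv.subLeft y) _).symm
    _ = g (x - y) * ∑ w, (mulCoboundary g (x - y) w)⁻¹ := by simp only [hterm, mul_sum]
    _ = 0 := by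
        rw [sum_inv_mulCoboundary_eq_zero hg hadd (hnondeg _ (sub_ne_zero.2 hxy)), mul_zero]

end Unitary

lemma Matrix.inv_ofReal_smul_mem_unitaryGroup {n : Type*} [Fintype n] [DecidableEq n]
    {M : Matrix n n ℂ} {r : ℝ} (hr : r ≠ 0) (hM : M * Mᴴ = ((r ^ 2 : ℝ) : ℂ) • 1) :
    (r : ℂ)⁻¹ • M ∈ unitaryGroup n ℂ := by
  rw [mem_unitaryGroup_iff, star_eq_conjTranspose, conjTranspose_smul, Matrix.smul_mul,
    Matrix.mul_smul, hM, smul_smul, smul_smul]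
  convert one_smul ℂ (1 : Matrix n n ℂ)
  have : (r : ℂ) ≠ 0 := Complex.ofReal_ne_zero.2 hr
  simp only [star_inv₀, Complex.star_def, Complex.conj_ofReal, Complex.ofReal_pow]
  field_simp

theorem S_operator_unitary_general
    {A : Type*} [AddCommGroup A] [Fintype A] [DecidableEq A]
    (g : A → ℂ) (hg_abs : ∀ x, ‖g x‖ = 1)
    (χ : A → A → ℂ) (hχ : ∀ x y, χ x y = g x * g y * (g (x + y))⁻¹)
    (hχ_add : ∀ x x' y, χ (x + x') y = χ x y * χ x' y)
    (hχ_nondeg : ∀ x : A, x ≠ 0 → ∃ y : A, χ x y ≠ 1)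
    (δ : A → ℂ) (hδ : ∀ a, δ a = if a = 0 then 1 else 0) :
    (∀ x y : A,
        ∑ z : A, g (x - z) * (starRingEnd ℂ) (g (y - z))
          = (Fintype.card A : ℂ) * δ (x - y)) ∧
    (Matrix.of (fun x y : A =>
        ((Real.sqrt (Fintype.card A) : ℂ))⁻¹ * g (x - y)) ∈ Matrix.unitaryGroup A ℂ) := by
  obtain rfl : χ = mulCoboundary g := funext₂ hχ
  have hsum := sum_apply_sub_mul_conj_apply_sub_s5 hg_abs hχ_add hχ_nondeg
  refine ⟨fun x y => by simp [hsum, hδ, sub_eq_zero], ?_⟩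
  have hcard : (0 : ℝ) < Fintype.card A := Nat.cast_pos.2 Fintype.card_pos
  refine inv_ofReal_smul_mem_unitaryGroup (M := of fun x y => g (x - y))
    (Real.sqrt_ne_zero'.2 hcard) ?_
  ext x y
  simp [mul_apply, hsum, one_apply, Real.sq_sqrt hcard.le]

/-- Unitarity of the operator `S`, finite-group version: the kernel
`S(x,y) = g(x-y)` satisfies `∑_z g(x-z) conj (g(y-z)) = |A| δ(x-y)`, and the
matrix `|A|^{-1/2} g(x-y)` is unitary. -/
theorem S_operator_unitary
    {A : Type*} [AddCommGroup A] [Fintype A] [DecidableEq A]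
    (g : A → ℂ) (hg_abs : ∀ x, ‖g x‖ = 1) (hg_sym : ∀ x, g (-x) = g x)
    (χ : A → A → ℂ) (hχ : ∀ x y, χ x y = g x * g y * (g (x + y))⁻¹)
    (hχ_add : ∀ x x' y, χ (x + x') y = χ x y * χ x' y)
    (hχ_nondeg : ∀ x : A, x ≠ 0 → ∃ y : A, χ x y ≠ 1)
    (δ : A → ℂ) (hδ : ∀ a, δ a = if a = 0 then 1 else 0) :
    (∀ x y : A,
        ∑ z : A, g (x - z) * (starRingEnd ℂ) (g (y - z))
          = (Fintype.card A : ℂ) * δ (x - y)) ∧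
    (Matrix.of (fun x y : A =>
        ((Real.sqrt (Fintype.card A) : ℂ))⁻¹ * g (x - y)) ∈ Matrix.unitaryGroup A ℂ) :=
  S_operator_unitary_general g hg_abs χ hχ hχ_add hχ_nondeg δ hδ
end

section
/- (Pentagon equation from a bialgebra.) Let V be a bialgebra over a field k, with multiplication ∇ : V ⊗ V → V and comultiplication Δ : V → V ⊗ V. Define the linear map S = (id_V ⊗ ∇) ∘ (Δ ⊗ id_V) : V ⊗ V → V ⊗ V. For 1 ≤ i < j ≤ 3 let S_{i,j} denote the endomorphism of V^{⊗3} acting as S on the i-th and j-th tensor factors and as the identity on the remaining factor (so S_{1,2} = S ⊗ id_V, S_{2,3} = id_V ⊗ S, and S_{1,3} = (id_V ⊗ σ) ∘ (S ⊗ id_V) ∘ (id_V ⊗ σ), where σ : V ⊗ V → V ⊗ V is the flip x ⊗ y ↦ y ⊗ x). Then S_{1,2} ∘ S_{1,3} ∘ S_{2,3} = S_{2,3} ∘ S_{1,2} as endomorphisms of V^{⊗3}. -/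
/-!
In Sweedler notation `S (a ⊗ b) = a₍₁₎ ⊗ a₍₂₎ b = Δ(a) (1 ⊗ b)` in the algebra `V ⊗ V`. Likewise
`S₁₂ (a ⊗ w) = Δ₁₂(a) (1 ⊗ w)` and `S₁₃ (a ⊗ w) = Δ₁₃(a) (1 ⊗ w)` with `Δ₁₂ a = a₍₁₎ ⊗ a₍₂₎ ⊗ 1`,
`Δ₁₃ a = a₍₁₎ ⊗ 1 ⊗ a₍₂₎`, so `S₁₂` commutes with right multiplication by `1 ⊗ V ⊗ V`. Both sides
of the pentagon then send `x ⊗ y ⊗ z` to `((id ⊗ Δ) Δ x) (1 ⊗ S (y ⊗ z))`: the left side because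
`S₁₂ (Δ₁₃ x) = (Δ ⊗ id) Δ x = (id ⊗ Δ) Δ x` by coassociativity, the right side because `Δ` is
multiplicative, so that `S (x₍₂₎ y ⊗ z) = Δ(x₍₂₎) S (y ⊗ z)`.
-/

open TensorProduct

noncomputable section

namespace PentagonBialgebra

variable (k V : Type*) [Field k] [Ring V] [Bialgebra k V]

/-- The flip `σ : V ⊗ V → V ⊗ V`, `x ⊗ y ↦ y ⊗ x`. -/
def flip : V ⊗[k] V →ₗ[k] V ⊗[k] V := (TensorProduct.comm k V V).toLinearMap

/-- The operator `S = (id_V ⊗ ∇) ∘ (Δ ⊗ id_V) : V ⊗ V → V ⊗ V` (with the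
associativity isomorphism inserted). -/
def Sop : V ⊗[k] V →ₗ[k] V ⊗[k] V :=
  (TensorProduct.map LinearMap.id (LinearMap.mul' k V)) ∘ₗ
    (TensorProduct.assoc k V V V).toLinearMap ∘ₗ
      (TensorProduct.map Coalgebra.comul LinearMap.id)

/-- `S_{1,2} = S ⊗ id_V`, acting on `V^{⊗3} = V ⊗ (V ⊗ V)`. -/
def S12 : V ⊗[k] (V ⊗[k] V) →ₗ[k] V ⊗[k] (V ⊗[k] V) :=
  (TensorProduct.assoc k V V V).toLinearMap ∘ₗ
    (TensorProduct.map (Sop k V) LinearMap.id) ∘ₗ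
      (TensorProduct.assoc k V V V).symm.toLinearMap

/-- `S_{2,3} = id_V ⊗ S`, acting on `V^{⊗3} = V ⊗ (V ⊗ V)`. -/
def S23 : V ⊗[k] (V ⊗[k] V) →ₗ[k] V ⊗[k] (V ⊗[k] V) :=
  TensorProduct.map LinearMap.id (Sop k V)

/-- `S_{1,3} = (id_V ⊗ σ) ∘ (S ⊗ id_V) ∘ (id_V ⊗ σ)`. -/
def S13 : V ⊗[k] (V ⊗[k] V) →ₗ[k] V ⊗[k] (V ⊗[k] V) :=
  (TensorProduct.map LinearMap.id (flip k V)) ∘ₗ S12 k V ∘ₗ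
    (TensorProduct.map LinearMap.id (flip k V))

open Coalgebra

section

variable {k V}

def comul₁₂ : V →ₗ[k] V ⊗[k] (V ⊗[k] V) :=
  (Algebra.TensorProduct.includeLeft : V →ₐ[k] V ⊗[k] V).toLinearMap.lTensor V ∘ₗ comul

def comul₁₃ : V →ₗ[k] V ⊗[k] (V ⊗[k] V) :=
  (Algebra.TensorProduct.includeRight : V →ₐ[k] V ⊗[k] V).toLinearMap.lTensor V ∘ₗ comul

lemma Sop_tmul (a b : V) : Sop k V (a ⊗ₜ b) = comul (R := k) a * (1 ⊗ₜ b) := by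
  simp only [Sop, LinearMap.comp_apply, map_tmul, LinearMap.id_apply, LinearEquiv.coe_coe]
  generalize comul (R := k) a = t
  induction t using TensorProduct.induction_on with
  | zero => simp
  | tmul p q => simp
  | add t t' ht ht' => simp only [add_tmul, map_add, add_mul, ht, ht']

lemma Sop_mul_tmul (a b c : V) :
    Sop k V ((a * b) ⊗ₜ c) = comul (R := k) a * Sop k V (b ⊗ₜ c) := by
  rw [Sop_tmul, Sop_tmul, Bialgebra.comul_mul, mul_assoc]

lemma S12_tmul (a : V) (w : V ⊗[k] V) : S12 k V (a ⊗ₜ w) = comul₁₂ a * (1 ⊗ₜ w) := by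
  induction w using TensorProduct.induction_on with
  | zero => simp
  | tmul b c =>
    simp only [S12, comul₁₂, LinearMap.comp_apply, LinearEquiv.coe_coe, assoc_symm_tmul,
      map_tmul, LinearMap.id_apply, Sop_tmul]
    generalize comul (R := k) a = t
    induction t using TensorProduct.induction_on with
    | zero => simp
    | tmul p q => simp
    | add t t' ht ht' => simp only [add_tmul, map_add, add_mul, ht, ht']
  | add w w' hw hw' => simp only [tmul_add, map_add, mul_add, hw, hw']

lemma S13_tmul (a : V) (w : V ⊗[k] V) : S13 k V (a ⊗ₜ w) = comul₁₃ a * (1 ⊗ₜ w) := by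
  induction w using TensorProduct.induction_on with
  | zero => simp
  | tmul b c =>
    simp only [S13, S12, flip, comul₁₃, LinearMap.comp_apply, LinearEquiv.coe_coe,
      assoc_symm_tmul, map_tmul, comm_tmul, LinearMap.id_apply, Sop_tmul]
    generalize comul (R := k) a = t
    induction t using TensorProduct.induction_on with
    | zero => simp
    | tmul p q => simp
    | add t t' ht ht' => simp only [add_tmul, map_add, add_mul, ht, ht']
  | add w w' hw hw' => simp only [tmul_add, map_add, mul_add, hw, hw']

lemma S12_mul_one_tmul (t : V ⊗[k] (V ⊗[k] V)) (w : V ⊗[k] V) :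
    S12 k V (t * (1 ⊗ₜ w)) = S12 k V t * (1 ⊗ₜ w) := by
  induction t using TensorProduct.induction_on with
  | zero => simp
  | tmul a u =>
    rw [Algebra.TensorProduct.tmul_mul_tmul, mul_one, S12_tmul, S12_tmul, mul_assoc,
      Algebra.TensorProduct.tmul_mul_tmul, one_mul]
  | add t t' ht ht' => simp only [add_mul, map_add, ht, ht']

lemma S12_comul₁₃ (a : V) : S12 k V (comul₁₃ a) = comul.lTensor V (comul (R := k) a) := by
  rw [← coassoc_apply]
  simp only [comul₁₃, LinearMap.comp_apply]
  generalize comul (R := k) a = t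
  induction t using TensorProduct.induction_on with
  | zero => simp
  | tmul p q => simp [S12, Sop_tmul, ← Algebra.TensorProduct.one_def]
  | add t t' ht ht' => simp only [map_add, ht, ht']

lemma S23_S12_tmul (x y z : V) :
    S23 k V (S12 k V (x ⊗ₜ (y ⊗ₜ z))) =
      comul.lTensor V (comul (R := k) x) * (1 ⊗ₜ Sop k V (y ⊗ₜ z)) := by
  simp only [S12, LinearMap.comp_apply, LinearEquiv.coe_coe, assoc_symm_tmul, map_tmul,
    LinearMap.id_apply, Sop_tmul x]
  generalize comul (R := k) x = t
  induction t using TensorProduct.induction_on with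
  | zero => simp
  | tmul p q => simp [S23, ← Sop_mul_tmul]
  | add t t' ht ht' => simp only [add_mul, add_tmul, map_add, ht, ht']

lemma S12_S13_S23_tmul (x y z : V) :
    S12 k V (S13 k V (S23 k V (x ⊗ₜ (y ⊗ₜ z)))) =
      comul.lTensor V (comul (R := k) x) * (1 ⊗ₜ Sop k V (y ⊗ₜ z)) := by
  rw [S23, map_tmul, LinearMap.id_apply, S13_tmul, S12_mul_one_tmul, S12_comul₁₃]

end

/-- Pentagon equation for the operator `S` built from a bialgebra:
`S_{1,2} ∘ S_{1,3} ∘ S_{2,3} = S_{2,3} ∘ S_{1,2}` as endomorphisms of `V^{⊗3}`. -/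
theorem pentagon_of_bialgebra : S12 k V ∘ₗ S13 k V ∘ₗ S23 k V = S23 k V ∘ₗ S12 k V := by
  ext x y z
  exact (S12_S13_S23_tmul x y z).trans (S23_S12_tmul x y z).symm

end PentagonBialgebra
end
end

section
/- (Set-theoretical solution of the Pachner (3,3)-relation.) Let I = (0,1) ⊂ ℝ and define Q : I² → I³ by Q(x,y) = ((x − x·y)/(1 − x·y), x·y, (y − x·y)/(1 − x·y)). Let σ : I² → I² be the swap σ(x,y) = (y,x). Then the two maps I³ → I⁶ given by ((Q∘σ) × id_{I}³) ∘ (id_I × Q × id_I) ∘ (σ × id_I²) ∘ (id_I × Q) and (id_I² × σ × id_I²) ∘ (id_I³ × (Q∘σ)) ∘ (id_I × Q × id_I) ∘ (id_I² × σ) ∘ (Q × id_I) are equal, where × denotes the cartesian product of maps, id_I^n the identity of I^n, and compositions are written right-to-left (the rightmost map is applied first). -/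
/-!
With `Q₁ x y = x(1 - y)/(1 - xy)` one has `Q(x, y) = (Q₁ x y, xy, Q₁ y x)`, so comparing the six
coordinates of both sides at `(x, y, z)` leaves three rational identities:
`Q₁ x (yz) · Q₁ y z = Q₁ (xy) z`, `Q₁ (Q₁ x (yz)) (Q₁ y z) = Q₁ x y`, and
`Q₁ (Q₁ y z) (Q₁ x (yz)) = y(1 - x)(1 - z)/((1 - xy)(1 - yz))`, whose right side is symmetric
in `x` and `z`. The remaining coordinates are the first two with `x` and `z` exchanged. All of
them come from `1 - Q₁ x (yz) · Q₁ y z = (1 - xy)/(1 - xyz)`.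
-/

noncomputable section

namespace PachnerSetTheoretic

/-- The open unit interval `I = (0,1) ⊂ ℝ`. -/
def I : Set ℝ := Set.Ioo 0 1

lemma mul_mem_I {x y : ℝ} (hx : x ∈ I) (hy : y ∈ I) : x * y ∈ I := by
  simp only [I, Set.mem_Ioo] at hx hy ⊢
  exact ⟨mul_pos hx.1 hy.1, by nlinarith [hx.1, hx.2, hy.1, hy.2]⟩

lemma first_mem_I {x y : ℝ} (hx : x ∈ I) (hy : y ∈ I) :
    (x - x * y) / (1 - x * y) ∈ I := by
  simp only [I, Set.mem_Ioo] at hx hy ⊢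
  have h1 : 0 < 1 - x * y := by nlinarith [hx.1, hx.2, hy.1, hy.2]
  refine ⟨div_pos (by nlinarith [hx.1, hy.2]) h1, ?_⟩
  rw [div_lt_one h1]
  linarith [hx.2]

lemma third_mem_I {x y : ℝ} (hx : x ∈ I) (hy : y ∈ I) :
    (y - x * y) / (1 - x * y) ∈ I := by
  simp only [I, Set.mem_Ioo] at hx hy ⊢
  have h1 : 0 < 1 - x * y := by nlinarith [hx.1, hx.2, hy.1, hy.2]
  refine ⟨div_pos (by nlinarith [hy.1, hx.2]) h1, ?_⟩
  rw [div_lt_one h1]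
  linarith [hy.2]

/-- The set-theoretical solution `Q : I² → I³`,
`Q(x,y) = ((x − x·y)/(1 − x·y), x·y, (y − x·y)/(1 − x·y))`. -/
def Q (p : I × I) : I × I × I :=
  (⟨((p.1 : ℝ) - p.1 * p.2) / (1 - p.1 * p.2), first_mem_I p.1.2 p.2.2⟩,
   ⟨(p.1 : ℝ) * p.2, mul_mem_I p.1.2 p.2.2⟩,
   ⟨((p.2 : ℝ) - p.1 * p.2) / (1 - p.1 * p.2), third_mem_I p.1.2 p.2.2⟩)

/-- The swap `σ : I² → I²`. -/
def swap : I × I → I × I := fun p => (p.2, p.1)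

/-- For `F : I² → I³`, the map `F × id_α` acting on the first two factors. -/
def front {α : Type*} (F : I × I → I × I × I) : I × I × α → I × I × I × α :=
  fun p => ((F (p.1, p.2.1)).1, (F (p.1, p.2.1)).2.1, (F (p.1, p.2.1)).2.2, p.2.2)

/-- The map `σ × id_α` swapping the first two factors. -/
def swap12 {α : Type*} : I × I × α → I × I × α := fun p => (p.2.1, p.1, p.2.2)

section Field

variable {K : Type*} [Field K]

def Q₁ (x y : K) : K := (x - x * y) / (1 - x * y)

lemma Q₁_eq_mul_div (x y : K) : Q₁ x y = x * (1 - y) / (1 - x * y) := by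
  rw [Q₁, mul_one_sub]

lemma one_sub_Q₁ {x y : K} (h : 1 - x * y ≠ 0) : 1 - Q₁ x y = (1 - x) / (1 - x * y) := by
  rw [Q₁, eq_div_iff h, sub_mul, div_mul_cancel₀ _ h]
  ring

variable {x y z : K}

lemma Q₁_mul_Q₁ (hyz : 1 - y * z ≠ 0) : Q₁ x (y * z) * Q₁ y z = Q₁ (x * y) z := by
  simp only [Q₁_eq_mul_div]
  field_simp

lemma one_sub_Q₁_mul_Q₁ (hyz : 1 - y * z ≠ 0) (hxyz : 1 - x * y * z ≠ 0) :
    1 - Q₁ x (y * z) * Q₁ y z = (1 - x * y) / (1 - x * y * z) := by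
  rw [Q₁_mul_Q₁ hyz, one_sub_Q₁ hxyz]

lemma Q₁_Q₁_Q₁ (hyz : 1 - y * z ≠ 0) (hxyz : 1 - x * y * z ≠ 0) :
    Q₁ (Q₁ x (y * z)) (Q₁ y z) = Q₁ x y := by
  rw [Q₁_eq_mul_div (Q₁ _ _), one_sub_Q₁ hyz, one_sub_Q₁_mul_Q₁ hyz hxyz, Q₁_eq_mul_div x (y * z),
    Q₁_eq_mul_div x y]
  field_simp

lemma Q₁_Q₁_Q₁_swap (hyz : 1 - y * z ≠ 0) (hxyz : 1 - x * y * z ≠ 0) :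
    Q₁ (Q₁ y z) (Q₁ x (y * z)) = y * (1 - x) * (1 - z) / ((1 - x * y) * (1 - y * z)) := by
  have h : 1 - Q₁ y z * Q₁ x (y * z) = (1 - x * y) / (1 - x * y * z) := by
    rw [mul_comm, one_sub_Q₁_mul_Q₁ hyz hxyz]
  rw [Q₁_eq_mul_div (Q₁ _ _), h, one_sub_Q₁ (by rwa [← mul_assoc]), ← mul_assoc,
    Q₁_eq_mul_div y z, mul_div_assoc', div_div_div_cancel_right₀ hxyz]
  field_simp

end Field

lemma one_sub_mul_ne_zero {x y : ℝ} (hx : x ∈ I) (hy : y ∈ I) : 1 - x * y ≠ 0 :=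
  sub_ne_zero.mpr (mul_mem_I hx hy).2.ne'

@[simp] lemma coe_Q_fst (p : I × I) : ((Q p).1 : ℝ) = Q₁ (p.1 : ℝ) p.2 := rfl

@[simp] lemma coe_Q_snd_fst (p : I × I) : ((Q p).2.1 : ℝ) = p.1 * p.2 := rfl

@[simp] lemma coe_Q_snd_snd (p : I × I) : ((Q p).2.2 : ℝ) = Q₁ (p.2 : ℝ) p.1 := by
  simp only [Q, Q₁, mul_comm (p.2 : ℝ)]

/-- The set-theoretical Pachner (3,3)-relation: the two composite maps
`I³ → I⁶` coincide. -/
theorem pachner33_set_theoretic :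
    (front (Q ∘ swap) ∘ Prod.map id (front Q) ∘ swap12 ∘ Prod.map id Q
        : I × I × I → I × I × I × I × I × I)
      = Prod.map id (Prod.map id swap12) ∘
          Prod.map id (Prod.map id (Prod.map id (Q ∘ swap))) ∘
            Prod.map id (front Q) ∘ Prod.map id (Prod.map id swap) ∘ front Q := by
  funext ⟨⟨x, hx⟩, ⟨y, hy⟩, ⟨z, hz⟩⟩
  simp only [Function.comp_apply, front, swap, swap12, Prod.map_apply, id, Prod.ext_iff,
    Subtype.ext_iff, coe_Q_fst, coe_Q_snd_fst, coe_Q_snd_snd]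
  have hyx := one_sub_mul_ne_zero hy hx
  have hyz := one_sub_mul_ne_zero hy hz
  have hxyz := one_sub_mul_ne_zero (mul_mem_I hx hy) hz
  have hzyx := one_sub_mul_ne_zero (mul_mem_I hz hy) hx
  refine ⟨Q₁_Q₁_Q₁ hyz hxyz, Q₁_mul_Q₁ hyz, ?_, (mul_assoc x y z).symm, ?_, ?_⟩
  · rw [Q₁_Q₁_Q₁_swap hyz hxyz, mul_comm x y, Q₁_Q₁_Q₁_swap hyx hzyx]
    ring
  · rw [mul_comm x y, mul_comm (Q₁ y x), Q₁_mul_Q₁ hyx, mul_comm z y]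
  · rw [mul_comm x y, Q₁_Q₁_Q₁ hyx hzyx]

end PachnerSetTheoretic
end
end

section
/- (Bicharacter solution of the coordinate Pachner (3,3)-relation.) Let A be a finite abelian group (written additively) and χ : A × A → ℂ a bicharacter, i.e. χ(x+x′,y) = χ(x,y)·χ(x′,y) and χ(x,y+y′) = χ(x,y)·χ(x,y′) for all x,x′,y,y′ ∈ A. For a ∈ A write δ(a) = 1 if a = 0 and δ(a) = 0 otherwise, and define Q^{x,y,z}_{u,v} = χ(x,z)·δ(x+y−u)·δ(y+z−v) for x,y,z,u,v ∈ A. Then for all i,j,k,l,m,n,p,q,r ∈ A: ∑_{s,t,u ∈ A} Q^{i,l,m}_{s,t}·Q^{s,j,n}_{p,u}·Q^{t,u,k}_{q,r} = ∑_{s,t,u ∈ A} Q^{m,n,k}_{s,t}·Q^{l,j,t}_{u,r}·Q^{i,u,s}_{p,q}. -/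
open Finset

/-- Bicharacter solution of the coordinate Pachner (3,3)-relation over a finite
abelian group: with `Q^{x,y,z}_{u,v} = χ(x,z)·δ(x+y−u)·δ(y+z−v)`, the coordinate
Pachner (3,3)-relation holds. -/
theorem bicharacter_pachner33
    {A : Type*} [AddCommGroup A] [Fintype A] [DecidableEq A]
    (χ : A → A → ℂ)
    (hχ_add_left : ∀ x x' y, χ (x + x') y = χ x y * χ x' y)
    (hχ_add_right : ∀ x y y', χ x (y + y') = χ x y * χ x y')
    (δ : A → ℂ) (hδ : ∀ a, δ a = if a = 0 then 1 else 0)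
    (Q : A → A → A → A → A → ℂ)
    (hQ : ∀ x y z u v, Q x y z u v = χ x z * δ (x + y - u) * δ (y + z - v)) :
    ∀ i j k l m n p q r : A,
      ∑ s : A, ∑ t : A, ∑ u : A, Q i l m s t * Q s j n p u * Q t u k q r
        = ∑ s : A, ∑ t : A, ∑ u : A, Q m n k s t * Q l j t u r * Q i u s p q := by
  intro i j k l m n p q r
  simp only [hQ, hδ, sub_eq_zero, mul_ite, ite_mul, mul_zero, zero_mul, mul_one, one_mul]
  rw [Fintype.sum_eq_single (i + l) (fun x hx => by simp [Ne.symm hx]),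
      Fintype.sum_eq_single (l + m) (fun x hx => by simp [Ne.symm hx]),
      Fintype.sum_eq_single (j + n) (fun x hx => by simp [Ne.symm hx]),
      Fintype.sum_eq_single (m + n) (fun x hx => by simp [Ne.symm hx]),
      Fintype.sum_eq_single (n + k) (fun x hx => by simp [Ne.symm hx]),
      Fintype.sum_eq_single (l + j) (fun x hx => by simp [Ne.symm hx])]
  simp only [if_pos rfl, hχ_add_left, hχ_add_right]
  by_cases h1 : i + l + j = p <;> by_cases h2 : l + m + j + n = q <;> by_cases h3 : j + n + k = r <;>
    simp_all [add_assoc, add_comm, add_left_comm] <;> ring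
end

section
/- (Equivalence of the coordinate Pachner (3,3)-relation with a family of Yang–Baxter equations.) The family Q satisfies the coordinate Pachner (3,3)-relation, i.e. for all i,j,k,l,m,n,p,q,r ∈ B: ∑_{s,t,u ∈ B} Q^{i,l,m}_{s,t}·Q^{s,j,n}_{p,u}·Q^{t,u,k}_{q,r} = ∑_{s,t,u ∈ B} Q^{m,n,k}_{s,t}·Q^{l,j,t}_{u,r}·Q^{i,u,s}_{p,q}, if and only if for all i,j,k ∈ B the following Yang–Baxter-type equality holds in End(V^{⊗3}): X^i_{1,2} ∘ Y^j_{1,3} ∘ Z^k_{2,3} = Z^k_{2,3} ∘ Y^j_{1,3} ∘ X^i_{1,2}. -/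
/-!
In the basis `e ⊗ e ⊗ e` of `V^{⊗3}`, the matrix of `W_{1,2}` is `W ⊗ 1`, that of `W_{2,3}` is
`1 ⊗ W`, and that of `W_{1,3}` is `W` acting on the outer two indices with a Kronecker delta on the
middle one. Multiplying these matrices out, the `((l,m,n),(p,q,r))` entry of
`X^i_{1,2} Y^j_{1,3} Z^k_{2,3}` is the left side of the Pachner relation for `i,j,k,l,m,n,p,q,r`,
and that of `Z^k_{2,3} Y^j_{1,3} X^i_{1,2}` is its right side. An endomorphism is determined by its
matrix, so the two families of equations say the same thing.
-/

open TensorProduct Finset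

noncomputable section

namespace PachnerCoordYBE

variable {V : Type*} [AddCommGroup V] [Module ℂ V]

/-- The flip `σ : V ⊗ V → V ⊗ V`. -/
def flip : V ⊗[ℂ] V →ₗ[ℂ] V ⊗[ℂ] V := (TensorProduct.comm ℂ V V).toLinearMap

/-- `W_{1,2} = W ⊗ id`, acting on `V^{⊗3} = V ⊗ (V ⊗ V)`. -/
def op12 (W : V ⊗[ℂ] V →ₗ[ℂ] V ⊗[ℂ] V) :
    V ⊗[ℂ] (V ⊗[ℂ] V) →ₗ[ℂ] V ⊗[ℂ] (V ⊗[ℂ] V) :=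
  (TensorProduct.assoc ℂ V V V).toLinearMap ∘ₗ
    TensorProduct.map W LinearMap.id ∘ₗ (TensorProduct.assoc ℂ V V V).symm.toLinearMap

/-- `W_{2,3} = id ⊗ W`, acting on `V^{⊗3} = V ⊗ (V ⊗ V)`. -/
def op23 (W : V ⊗[ℂ] V →ₗ[ℂ] V ⊗[ℂ] V) :
    V ⊗[ℂ] (V ⊗[ℂ] V) →ₗ[ℂ] V ⊗[ℂ] (V ⊗[ℂ] V) :=
  TensorProduct.map LinearMap.id W

/-- `W_{1,3} = (id ⊗ σ) ∘ W_{1,2} ∘ (id ⊗ σ)`, acting on `V^{⊗3}`. -/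
def op13 (W : V ⊗[ℂ] V →ₗ[ℂ] V ⊗[ℂ] V) :
    V ⊗[ℂ] (V ⊗[ℂ] V) →ₗ[ℂ] V ⊗[ℂ] (V ⊗[ℂ] V) :=
  TensorProduct.map LinearMap.id flip ∘ₗ op12 W ∘ₗ TensorProduct.map LinearMap.id flip

section

variable {R ι κ τ M N P : Type*} [CommSemiring R] [AddCommMonoid M] [AddCommMonoid N]
  [AddCommMonoid P] [Module R M] [Module R N] [Module R P]

theorem _root_.Module.Basis.tensorProduct_repr_comm_apply (b : Module.Basis ι R M)
    (c : Module.Basis κ R N) (x : M ⊗[R] N) (i : ι) (j : κ) :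
    (c.tensorProduct b).repr (TensorProduct.comm R M N x) (j, i)
      = (b.tensorProduct c).repr x (i, j) := by
  induction x using TensorProduct.induction_on with
  | zero => simp
  | tmul m n => simp [mul_comm]
  | add x y hx hy => simp_all

theorem _root_.Module.Basis.tensorProduct_repr_assoc_tmul_apply (b : Module.Basis ι R M)
    (c : Module.Basis κ R N) (d : Module.Basis τ R P) (x : M ⊗[R] N) (z : P)
    (i : ι) (j : κ) (k : τ) :
    (b.tensorProduct (c.tensorProduct d)).repr (TensorProduct.assoc R M N P (x ⊗ₜ z)) (i, j, k)
      = (b.tensorProduct c).repr x (i, j) * d.repr z k := by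
  induction x using TensorProduct.induction_on with
  | zero => simp
  | tmul m n => simp [mul_assoc, mul_comm]
  | add x y hx hy => simp_all [add_tmul, add_mul]

end

section

variable {B : Type*} (e : Module.Basis B ℂ V)

theorem repr_op12_tmul (W : V ⊗[ℂ] V →ₗ[ℂ] V ⊗[ℂ] V) (x y z : V) (l m n : B) :
    (e.tensorProduct (e.tensorProduct e)).repr (op12 W (x ⊗ₜ (y ⊗ₜ z))) (l, m, n)
      = (e.tensorProduct e).repr (W (x ⊗ₜ y)) (l, m) * e.repr z n := by
  simp [op12, Module.Basis.tensorProduct_repr_assoc_tmul_apply]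

theorem repr_map_id_flip (u : V ⊗[ℂ] (V ⊗[ℂ] V)) (l m n : B) :
    (e.tensorProduct (e.tensorProduct e)).repr (map LinearMap.id flip u) (l, m, n)
      = (e.tensorProduct (e.tensorProduct e)).repr u (l, n, m) := by
  induction u using TensorProduct.induction_on with
  | zero => simp
  | tmul x w => simp [flip, Module.Basis.tensorProduct_repr_comm_apply]
  | add u v hu hv => simp_all

theorem repr_op13_tmul (W : V ⊗[ℂ] V →ₗ[ℂ] V ⊗[ℂ] V) (x y z : V) (l m n : B) :
    (e.tensorProduct (e.tensorProduct e)).repr (op13 W (x ⊗ₜ (y ⊗ₜ z))) (l, m, n)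
      = (e.tensorProduct e).repr (W (x ⊗ₜ z)) (l, n) * e.repr y m := by
  rw [op13, LinearMap.comp_apply, LinearMap.comp_apply, repr_map_id_flip]
  simp [flip, repr_op12_tmul]

theorem repr_op23_tmul (W : V ⊗[ℂ] V →ₗ[ℂ] V ⊗[ℂ] V) (x y z : V) (l m n : B) :
    (e.tensorProduct (e.tensorProduct e)).repr (op23 W (x ⊗ₜ (y ⊗ₜ z))) (l, m, n)
      = e.repr x l * (e.tensorProduct e).repr (W (y ⊗ₜ z)) (m, n) := by
  simp [op23, mul_comm]

variable [Fintype B] [DecidableEq B]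

local notation "M₂" => LinearMap.toMatrix (e.tensorProduct e) (e.tensorProduct e)
local notation "M₃" =>
  LinearMap.toMatrix (e.tensorProduct (e.tensorProduct e)) (e.tensorProduct (e.tensorProduct e))

theorem toMatrix_op12_apply (W : V ⊗[ℂ] V →ₗ[ℂ] V ⊗[ℂ] V) (l m n p q r : B) :
    M₃ (op12 W) (l, m, n) (p, q, r)
      = M₂ W (l, m) (p, q) * (1 : Matrix B B ℂ) n r := by
  simp [LinearMap.toMatrix_apply, Module.Basis.tensorProduct_apply, repr_op12_tmul,
    Finsupp.single_apply, Matrix.one_apply, eq_comm]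

theorem toMatrix_op13_apply (W : V ⊗[ℂ] V →ₗ[ℂ] V ⊗[ℂ] V) (l m n p q r : B) :
    M₃ (op13 W) (l, m, n) (p, q, r)
      = M₂ W (l, n) (p, r) * (1 : Matrix B B ℂ) m q := by
  simp [LinearMap.toMatrix_apply, Module.Basis.tensorProduct_apply, repr_op13_tmul,
    Finsupp.single_apply, Matrix.one_apply, eq_comm]

theorem toMatrix_op23_apply (W : V ⊗[ℂ] V →ₗ[ℂ] V ⊗[ℂ] V) (l m n p q r : B) :
    M₃ (op23 W) (l, m, n) (p, q, r)
      = (1 : Matrix B B ℂ) l p * M₂ W (m, n) (q, r) := by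
  simp [LinearMap.toMatrix_apply, Module.Basis.tensorProduct_apply, repr_op23_tmul,
    Finsupp.single_apply, Matrix.one_apply, eq_comm]

theorem toMatrix_op12_op13_op23_apply (W₁ W₂ W₃ : V ⊗[ℂ] V →ₗ[ℂ] V ⊗[ℂ] V) (l m n p q r : B) :
    M₃ (op12 W₁ ∘ₗ op13 W₂ ∘ₗ op23 W₃) (l, m, n) (p, q, r)
      = ∑ s, ∑ t, ∑ u, M₂ W₁ (l, m) (s, t) * M₂ W₂ (s, n) (p, u) * M₂ W₃ (t, u) (q, r) := by
  rw [LinearMap.toMatrix_comp _ (e.tensorProduct (e.tensorProduct e)),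
    LinearMap.toMatrix_comp _ (e.tensorProduct (e.tensorProduct e))]
  simp only [Matrix.mul_apply, Fintype.sum_prod_type, toMatrix_op12_apply,
    toMatrix_op13_apply, toMatrix_op23_apply, Matrix.one_apply]
  simp [Finset.mul_sum, mul_assoc]

theorem toMatrix_op23_op13_op12_apply (W₁ W₂ W₃ : V ⊗[ℂ] V →ₗ[ℂ] V ⊗[ℂ] V) (l m n p q r : B) :
    M₃ (op23 W₃ ∘ₗ op13 W₂ ∘ₗ op12 W₁) (l, m, n) (p, q, r)
      = ∑ s, ∑ t, ∑ u, M₂ W₃ (m, n) (s, t) * M₂ W₂ (l, t) (u, r) * M₂ W₁ (u, s) (p, q) := by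
  rw [LinearMap.toMatrix_comp _ (e.tensorProduct (e.tensorProduct e)),
    LinearMap.toMatrix_comp _ (e.tensorProduct (e.tensorProduct e))]
  simp only [Matrix.mul_apply, Fintype.sum_prod_type, toMatrix_op12_apply,
    toMatrix_op13_apply, toMatrix_op23_apply, Matrix.one_apply]
  simp [Finset.mul_sum, mul_assoc]

end

/-- Equivalence of the coordinate Pachner (3,3)-relation with the family of
Yang–Baxter equations `X^i_{1,2} Y^j_{1,3} Z^k_{2,3} = Z^k_{2,3} Y^j_{1,3} X^i_{1,2}`. -/
theorem coordinate_pachner33_iff_yang_baxter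
    {B : Type*} [Fintype B] [DecidableEq B]
    (e : Module.Basis B ℂ V)
    (Q : B → B → B → B → B → ℂ)
    (X Y Z : B → (V ⊗[ℂ] V →ₗ[ℂ] V ⊗[ℂ] V))
    (hX : ∀ i j k l m : B,
      ((e.tensorProduct e).repr (X i (e l ⊗ₜ[ℂ] e m))) (j, k) = Q i j k l m)
    (hY : ∀ i j k l m : B,
      ((e.tensorProduct e).repr (Y j (e l ⊗ₜ[ℂ] e m))) (i, k) = Q i j k l m)
    (hZ : ∀ i j k l m : B,
      ((e.tensorProduct e).repr (Z k (e l ⊗ₜ[ℂ] e m))) (i, j) = Q i j k l m) :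
    (∀ i j k l m n p q r : B,
        ∑ s : B, ∑ t : B, ∑ u : B, Q i l m s t * Q s j n p u * Q t u k q r
          = ∑ s : B, ∑ t : B, ∑ u : B, Q m n k s t * Q l j t u r * Q i u s p q)
      ↔ (∀ i j k : B,
          op12 (X i) ∘ₗ op13 (Y j) ∘ₗ op23 (Z k)
            = op23 (Z k) ∘ₗ op13 (Y j) ∘ₗ op12 (X i)) := by
  simp only [← (LinearMap.toMatrix (e.tensorProduct (e.tensorProduct e))
    (e.tensorProduct (e.tensorProduct e))).injective.eq_iff, ← Matrix.ext_iff, Prod.forall,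
    toMatrix_op12_op13_op23_apply, toMatrix_op23_op13_op12_apply]
  simp only [LinearMap.toMatrix_apply, Module.Basis.tensorProduct_apply, hX, hY, hZ]

end PachnerCoordYBE
end
end
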